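/- Let U ∈ ℝ^{n×r} satisfy the strong incoherence property: |⟨e_i, UUᵀe_j⟩ − (r/n)·1_{i=j}| ≤ μ₁√r/n for all 1 ≤ i, j ≤ n. Then for every subset S ⊆ {1,…,n} with |S| = d, the matrix U_S ∈ ℝ^{r×d} whose columns are the rows U^k of U for k ∈ S satisfies ‖U_S‖² ≤ (r + d·μ₁·√r)/n, where ‖·‖ denotes the spectral norm. -/

import Mathlib

open Matrix
open scoped BigOperators

noncomputable section

/-- Euclidean norm of a vector. -/
def vecNorm {β : Type*} [Fintype β] (x : β → ℝ) : ℝ :=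
  Real.sqrt (∑ i, x i ^ 2)

/-- Spectral norm (largest singular value) of a real matrix. -/
def specNorm {α β : Type*} [Fintype α] [Fintype β] (A : Matrix α β ℝ) : ℝ :=
  sSup {c | ∃ x : β → ℝ, vecNorm x ≤ 1 ∧ c = vecNorm (A.mulVec x)}

/-- Second largest singular value of a real matrix (Courant–Fischer characterization). -/
def sigma2 {α β : Type*} [Fintype α] [Fintype β] (A : Matrix α β ℝ) : ℝ :=
  ⨅ v : β → ℝ, sSup {c | ∃ x : β → ℝ,
    vecNorm x ≤ 1 ∧ (∑ i, v i * x i) = 0 ∧ c = vecNorm (A.mulVec x)}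

/-- Frobenius norm. -/
def frobNorm {α β : Type*} [Fintype α] [Fintype β] (A : Matrix α β ℝ) : ℝ :=
  Real.sqrt (∑ i, ∑ j, A i j ^ 2)

/-- Nuclear norm: the sum of the singular values, i.e. the trace of `√(AᵀA)`. -/
def nuclearNorm {α β : Type*} [Fintype α] [Fintype β] [DecidableEq β]
    (A : Matrix α β ℝ) : ℝ :=
  let hA := Matrix.posSemidef_conjTranspose_mul_self A
  (hA.1.eigenvectorUnitary.1 * Matrix.diagonal ((√·) ∘ hA.1.eigenvalues) *
    (star hA.1.eigenvectorUnitary : Matrix β β ℝ)).trace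

/-- The sampling operator `P_Ω`. -/
def sampl {n : ℕ} (Ω : Finset (Fin n × Fin n)) (M : Matrix (Fin n) (Fin n) ℝ) :
    Matrix (Fin n) (Fin n) ℝ :=
  Matrix.of fun i j => if (i, j) ∈ Ω then M i j else 0

/-- The biadjacency matrix `G` of the bipartite graph with edge set `Ω`. -/
def biadj {n : ℕ} (Ω : Finset (Fin n × Fin n)) : Matrix (Fin n) (Fin n) ℝ :=
  Matrix.of fun i j => if (i, j) ∈ Ω then (1 : ℝ) else 0

/-- `Ω` is the edge set of a `d`-regular bipartite graph: every row and every column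
of `G` has exactly `d` ones. -/
def RegularSampling {n : ℕ} (Ω : Finset (Fin n × Fin n)) (d : ℕ) : Prop :=
  (∀ i : Fin n, (Finset.univ.filter fun j => (i, j) ∈ Ω).card = d) ∧
  (∀ j : Fin n, (Finset.univ.filter fun i => (i, j) ∈ Ω).card = d)

/-- Assumption G1: the all-ones vector is a top left- and right-singular vector of `G`,
with `σ₁(G) = d`. -/
def AssumptionG1 {n : ℕ} (Ω : Finset (Fin n × Fin n)) (d : ℕ) : Prop :=
  specNorm (biadj Ω) = d ∧
  (biadj Ω).mulVec (fun _ => 1) = (fun _ => (d : ℝ)) ∧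
  Matrix.vecMul (fun _ => 1) (biadj Ω) = (fun _ => (d : ℝ))

/-- Assumption G2: `σ₂(G) ≤ C·√d`. -/
def AssumptionG2 {n : ℕ} (Ω : Finset (Fin n × Fin n)) (d : ℕ) (C : ℝ) : Prop :=
  sigma2 (biadj Ω) ≤ C * Real.sqrt d

/-- Assumption A1 (`μ₀`-incoherence) for one factor: every row `U^i` satisfies
`‖U^i‖² ≤ μ₀ r / n`. -/
def IncoherentRows {n r : ℕ} (U : Matrix (Fin n) (Fin r) ℝ) (μ₀ : ℝ) : Prop :=
  ∀ i : Fin n, (∑ k, U i k ^ 2) ≤ μ₀ * r / n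

/-- Assumption A2 (strong incoherence with parameter `δ`) for one factor:
for every `S` with `|S| = d`, `‖(n/d)·∑_{k∈S} U^k (U^k)ᵀ − I‖ ≤ δ`. -/
def StrongIncoherence {n r : ℕ} (U : Matrix (Fin n) (Fin r) ℝ) (d : ℕ) (δ : ℝ) : Prop :=
  ∀ S : Finset (Fin n), S.card = d →
    specNorm (((n : ℝ) / (d : ℝ)) • (∑ k ∈ S, Matrix.vecMulVec (U k) (U k)) - 1) ≤ δ

/-- `M = U · diagonal s · Vᵀ` is a thin SVD of the rank-`r` matrix `M`. -/
def IsThinSVD {n r : ℕ} (M : Matrix (Fin n) (Fin n) ℝ)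
    (U : Matrix (Fin n) (Fin r) ℝ) (s : Fin r → ℝ) (V : Matrix (Fin n) (Fin r) ℝ) : Prop :=
  Uᵀ * U = 1 ∧ Vᵀ * V = 1 ∧ (∀ i, 0 < s i) ∧ M = U * Matrix.diagonal s * Vᵀ

/-- The projection `P_T` onto the subspace `T` spanned by matrices `UXᵀ` and `YVᵀ`. -/
def projT {n r : ℕ} (U V : Matrix (Fin n) (Fin r) ℝ) (Z : Matrix (Fin n) (Fin n) ℝ) :
    Matrix (Fin n) (Fin n) ℝ :=
  U * Uᵀ * Z + Z * (V * Vᵀ) - U * Uᵀ * Z * (V * Vᵀ)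

/-- The projection `P_{T⊥}` onto the orthogonal complement of `T`. -/
def projTperp {n r : ℕ} (U V : Matrix (Fin n) (Fin r) ℝ) (Z : Matrix (Fin n) (Fin n) ℝ) :
    Matrix (Fin n) (Fin n) ℝ :=
  (1 - U * Uᵀ) * Z * (1 - V * Vᵀ)

end

/-!
If the Gram matrix `AᵀA` of a matrix with `d` columns is entrywise within `c` of `t • 1`, then
`xᵀAᵀAx ≤ t‖x‖² + c (∑ |xₖ|)² ≤ (t + d c) ‖x‖²` by Cauchy–Schwarz. The Gram matrix of `U_S` is the
`S × S` block of `UUᵀ`, which strong incoherence controls with `t = r/n` and `c = μ₁√r/n`.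
-/

theorem sq_sum_abs_le_card_mul_sum_sq {ι : Type*} [Fintype ι] (x : ι → ℝ) :
    (∑ k, |x k|) ^ 2 ≤ Fintype.card ι * ∑ k, x k ^ 2 := by
  simpa only [sq_abs, Finset.card_univ] using
    sq_sum_le_card_mul_sum_sq (s := Finset.univ) (f := fun k => |x k|)

theorem dotProduct_mulVec_le_of_abs_le {ι : Type*} [Fintype ι] (E : Matrix ι ι ℝ) {c : ℝ}
    (hE : ∀ k l, |E k l| ≤ c) (x : ι → ℝ) : x ⬝ᵥ E *ᵥ x ≤ c * (∑ k, |x k|) ^ 2 := by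
  calc x ⬝ᵥ E *ᵥ x = ∑ k, ∑ l, x k * E k l * x l := by
        simp only [dotProduct, mulVec, Finset.mul_sum, mul_assoc]
    _ ≤ ∑ k, ∑ l, c * (|x k| * |x l|) := by
        refine Finset.sum_le_sum fun k _ => Finset.sum_le_sum fun l _ => ?_
        calc x k * E k l * x l ≤ |x k * E k l * x l| := le_abs_self _
          _ = |E k l| * (|x k| * |x l|) := by rw [abs_mul, abs_mul]; ring
          _ ≤ c * (|x k| * |x l|) := by gcongr; exact hE k l
    _ = c * (∑ k, |x k|) ^ 2 := by
        rw [sq, Finset.sum_mul_sum, Finset.mul_sum]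
        simp only [Finset.mul_sum]

theorem dotProduct_mulVec_le_of_abs_sub_ite_le {ι : Type*} [Fintype ι] [DecidableEq ι]
    (G : Matrix ι ι ℝ) {t c : ℝ} (hc : 0 ≤ c)
    (hG : ∀ k l, |G k l - if k = l then t else 0| ≤ c) (x : ι → ℝ) :
    x ⬝ᵥ G *ᵥ x ≤ (t + Fintype.card ι * c) * ∑ k, x k ^ 2 := by
  have hE : ∀ k l, |(G - t • 1) k l| ≤ c := fun k l => by
    simpa [one_apply] using hG k l
  have hdiag : x ⬝ᵥ (t • 1 : Matrix ι ι ℝ) *ᵥ x = t * ∑ k, x k ^ 2 := by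
    rw [smul_mulVec, one_mulVec, dotProduct_smul, smul_eq_mul]
    simp only [dotProduct, sq]
  calc x ⬝ᵥ G *ᵥ x = x ⬝ᵥ (t • 1 : Matrix ι ι ℝ) *ᵥ x + x ⬝ᵥ (G - t • 1) *ᵥ x := by
        rw [← dotProduct_add, ← add_mulVec, add_sub_cancel]
    _ ≤ t * ∑ k, x k ^ 2 + c * (Fintype.card ι * ∑ k, x k ^ 2) := by
        rw [hdiag]
        gcongr
        exact (dotProduct_mulVec_le_of_abs_le _ hE x).trans
          (mul_le_mul_of_nonneg_left (sq_sum_abs_le_card_mul_sum_sq x) hc)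
    _ = (t + Fintype.card ι * c) * ∑ k, x k ^ 2 := by ring

theorem specNorm_nonneg {α β : Type*} [Fintype α] [Fintype β] (A : Matrix α β ℝ) :
    0 ≤ specNorm A :=
  Real.sSup_nonneg fun _ ⟨_, _, hc⟩ => hc ▸ Real.sqrt_nonneg _

theorem specNorm_le_of_vecNorm_mulVec_le {α β : Type*} [Fintype α] [Fintype β]
    {A : Matrix α β ℝ} {C : ℝ} (hC : 0 ≤ C) (h : ∀ x, vecNorm (A *ᵥ x) ≤ C * vecNorm x) :
    specNorm A ≤ C := by
  refine Real.sSup_le ?_ hC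
  rintro _ ⟨x, hx, rfl⟩
  exact (h x).trans (mul_le_of_le_one_right hC hx)

theorem sum_sq_mulVec_eq_dotProduct_gram {α β : Type*} [Fintype α] [Fintype β]
    (A : Matrix α β ℝ) (x : β → ℝ) :
    ∑ i, (A *ᵥ x) i ^ 2 = x ⬝ᵥ (Aᵀ * A) *ᵥ x := by
  rw [← mulVec_mulVec, dotProduct_mulVec, vecMul_transpose]
  simp only [dotProduct, sq]

theorem specNorm_sq_le_of_abs_gram_sub_le {α β : Type*} [Fintype α] [Fintype β] [DecidableEq β]
    (A : Matrix α β ℝ) {t c : ℝ} (ht : 0 ≤ t) (hc : 0 ≤ c)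
    (hA : ∀ k l, |(Aᵀ * A) k l - if k = l then t else 0| ≤ c) :
    specNorm A ^ 2 ≤ t + Fintype.card β * c := by
  have hB : 0 ≤ t + Fintype.card β * c := by positivity
  rw [← Real.le_sqrt (specNorm_nonneg A) hB]
  refine specNorm_le_of_vecNorm_mulVec_le (Real.sqrt_nonneg _) fun x => ?_
  rw [vecNorm, vecNorm, ← Real.sqrt_mul hB, sum_sq_mulVec_eq_dotProduct_gram]
  exact Real.sqrt_le_sqrt (dotProduct_mulVec_le_of_abs_sub_ite_le _ hc hA x)

/-- under SIP, the submatrix `U_S` of rows of `U` indexed by `S`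
satisfies `‖U_S‖² ≤ (r + d μ₁ √r)/n`. -/
theorem stmt_5 {n r d : ℕ} {μ₁ : ℝ} (U : Matrix (Fin n) (Fin r) ℝ)
    (hSIP : ∀ i j : Fin n,
      |(U * Uᵀ) i j - (if i = j then (r : ℝ) / n else 0)| ≤ μ₁ * Real.sqrt r / n)
    (S : Finset (Fin n)) (hS : S.card = d) :
    specNorm (Matrix.of fun (a : Fin r) (k : {x // x ∈ S}) => U k.1 a) ^ 2 ≤
      ((r : ℝ) + d * μ₁ * Real.sqrt r) / n := by
  have hc : 0 ≤ μ₁ * Real.sqrt r / n := by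
    rcases n with _ | n
    · simp -- division by `0` is `0`
    · exact (abs_nonneg _).trans (hSIP 0 0)
  set A : Matrix (Fin r) {x // x ∈ S} ℝ := Matrix.of fun a k => U k.1 a
  have hgram : ∀ k l, |(Aᵀ * A) k l - if k = l then (r : ℝ) / n else 0| ≤ μ₁ * Real.sqrt r / n :=
    fun k l => by
      have hentry : (Aᵀ * A) k l = (U * Uᵀ) k.1 l.1 := by
        simp only [A, mul_apply, transpose_apply, of_apply]
      simpa only [hentry, Subtype.coe_inj] using hSIP k l
  calc specNorm A ^ 2 ≤ (r : ℝ) / n + Fintype.card {x // x ∈ S} * (μ₁ * Real.sqrt r / n) :=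
        specNorm_sq_le_of_abs_gram_sub_le A (by positivity) hc hgram
    _ = ((r : ℝ) + d * μ₁ * Real.sqrt r) / n := by
        rw [Fintype.card_coe, hS]; ring
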